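/- Let m, n ≥ 3 be integers. The strong deletion of any vertex v from C^3_{m,n} yields C^3_{m-1,n} (if v lies in the first block) or C^3_{m,n-1} (if v lies in the second block), and in either case the Seidel energy strictly decreases: E_S(C^3_{m,n}) > E_S(C^3_{m-1,n}) and E_S(C^3_{m,n}) > E_S(C^3_{m,n-1}); that is, the sum of the absolute values of the eigenvalues of S(m,n) strictly exceeds both that of S(m-1,n) and that of S(m,n-1). -/

import Mathlib

open Polynomial Matrix

/-- The Seidel matrix of the complete 3-uniform bipartite hypergraph `C³_{m,n}`. -/
noncomputable def seidelS (m n : ℕ) : Matrix (Fin m ⊕ Fin n) (Fin m ⊕ Fin n) ℝ :=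
  fun i j =>
    if i = j then 0
    else
      match i, j with
      | Sum.inl _, Sum.inl _ => 1 - 2 * (n : ℝ)
      | Sum.inr _, Sum.inr _ => 1 - 2 * (m : ℝ)
      | _, _ => 1 - 2 * ((m : ℝ) + (n : ℝ) - 2)

/-- Type-I hyperedge-deleted Seidel matrix. -/
noncomputable def seidelI (m n : ℕ) : Matrix (Fin m ⊕ Fin n) (Fin m ⊕ Fin n) ℝ :=
  fun i j =>
    match i, j with
    | Sum.inl a, Sum.inr b =>
        if a.val = 0 ∧ b.val ≤ 1 then 1 - 2 * ((m : ℝ) + (n : ℝ) - 3)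
        else seidelS m n (Sum.inl a) (Sum.inr b)
    | Sum.inr b, Sum.inl a =>
        if a.val = 0 ∧ b.val ≤ 1 then 1 - 2 * ((m : ℝ) + (n : ℝ) - 3)
        else seidelS m n (Sum.inr b) (Sum.inl a)
    | Sum.inr a, Sum.inr b =>
        if (a.val = 0 ∧ b.val = 1) ∨ (a.val = 1 ∧ b.val = 0) then 1 - 2 * ((m : ℝ) - 1)
        else seidelS m n (Sum.inr a) (Sum.inr b)
    | Sum.inl a, Sum.inl b => seidelS m n (Sum.inl a) (Sum.inl b)

/-- Type-II hyperedge-deleted Seidel matrix. -/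
noncomputable def seidelII (m n : ℕ) : Matrix (Fin m ⊕ Fin n) (Fin m ⊕ Fin n) ℝ :=
  fun i j =>
    match i, j with
    | Sum.inl a, Sum.inl b =>
        if (a.val = 0 ∧ b.val = 1) ∨ (a.val = 1 ∧ b.val = 0) then 1 - 2 * ((n : ℝ) - 1)
        else seidelS m n (Sum.inl a) (Sum.inl b)
    | Sum.inl a, Sum.inr b =>
        if a.val ≤ 1 ∧ b.val = 0 then 1 - 2 * ((m : ℝ) + (n : ℝ) - 3)
        else seidelS m n (Sum.inl a) (Sum.inr b)
    | Sum.inr b, Sum.inl a =>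
        if a.val ≤ 1 ∧ b.val = 0 then 1 - 2 * ((m : ℝ) + (n : ℝ) - 3)
        else seidelS m n (Sum.inr b) (Sum.inl a)
    | Sum.inr a, Sum.inr b => seidelS m n (Sum.inr a) (Sum.inr b)

/-- Seidel energy: sum of absolute values of the eigenvalues (roots of the
characteristic polynomial, with multiplicity). -/
noncomputable def seidelEnergy {k : Type*} [Fintype k] [DecidableEq k]
    (M : Matrix k k ℝ) : ℝ :=
  (M.charpoly.roots.map (fun x => |x|)).sum


/-! `S(m,n)` is constant off the diagonal on each of the three kinds of blocks, so `x • 1 - S(m,n)`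
is a diagonal matrix minus a rank-two matrix spanned by the two block indicators, and the matrix
determinant lemma computes its characteristic polynomial. The eigenvalues are `2n - 1` with
multiplicity `m - 1`, `2m - 1` with multiplicity `n - 1`, and the two roots of a quadratic whose
product is nonpositive. Hence
`E_S(C³_{m,n}) = (m-1)(2n-1) + (n-1)(2m-1) + √((m-n)² + 4mn(2m+2n-5)²)`,
which is symmetric in `m, n` and strictly increasing in `m`. -/

theorem Polynomial.X_sub_C_mul_X_sub_C_sub_C {u v w : ℝ} (hw : 0 ≤ w) :
    (X - C u) * (X - C v) - C w =
      (X - C ((u + v + √((u - v) ^ 2 + 4 * w)) / 2)) *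
        (X - C ((u + v - √((u - v) ^ 2 + 4 * w)) / 2)) := by
  have hs := Real.sq_sqrt (by positivity : 0 ≤ (u - v) ^ 2 + 4 * w)
  set s := √((u - v) ^ 2 + 4 * w)
  have hsum : (u + v + s) / 2 + (u + v - s) / 2 = u + v := by ring
  have hprod : (u + v + s) / 2 * ((u + v - s) / 2) = u * v - w := by
    linear_combination (-1 / 4 : ℝ) * hs
  calc (X - C u) * (X - C v) - C w = X ^ 2 - C (u + v) * X + C (u * v - w) := by
        simp only [map_add, map_sub, map_mul]; ring
    _ = X ^ 2 - C ((u + v + s) / 2 + (u + v - s) / 2) * X +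
          C ((u + v + s) / 2 * ((u + v - s) / 2)) := by rw [hsum, hprod]
    _ = _ := by simp only [map_add, map_mul]; ring

theorem abs_add_abs_eq_sqrt_of_mul_le {u v w : ℝ} (h : u * v ≤ w) :
    |(u + v + √((u - v) ^ 2 + 4 * w)) / 2| + |(u + v - √((u - v) ^ 2 + 4 * w)) / 2| =
      √((u - v) ^ 2 + 4 * w) := by
  have hs := Real.sq_sqrt (by nlinarith [sq_nonneg (u + v)] : 0 ≤ (u - v) ^ 2 + 4 * w)
  set s := √((u - v) ^ 2 + 4 * w)
  have hs0 : 0 ≤ s := Real.sqrt_nonneg _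
  have hprod : (u + v + s) / 2 * ((u + v - s) / 2) ≤ 0 := by nlinarith
  have h₁ : 0 ≤ (u + v + s) / 2 := by nlinarith
  have h₂ : (u + v - s) / 2 ≤ 0 := by nlinarith
  rw [abs_of_nonneg h₁, abs_of_nonpos h₂]
  ring

namespace Matrix

variable {R K : Type*} [CommRing R] [Field K]
  {ι κ : Type*} [Fintype ι] [Fintype κ] [DecidableEq ι] [DecidableEq κ]

def twoBlockConst (p q c : R) : Matrix (ι ⊕ κ) (ι ⊕ κ) R :=
  fun i j =>
    if i = j then 0
    else
      match i, j with
      | Sum.inl _, Sum.inl _ => p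
      | Sum.inr _, Sum.inr _ => q
      | _, _ => c

def blockIndicator (ι κ R : Type*) [Zero R] [One R] : Matrix (ι ⊕ κ) (Fin 2) R :=
  of (Sum.elim (fun _ => Pi.single 0 1) (fun _ => Pi.single 1 1))

theorem scalar_sub_twoBlockConst (p q c x : R) :
    scalar (ι ⊕ κ) x - twoBlockConst p q c =
      diagonal (Sum.elim (fun _ => x + p) (fun _ => x + q)) -
        blockIndicator ι κ R * !![p, c; c, q] * (blockIndicator ι κ R)ᵀ := by
  rw [scalar_apply]
  ext (i | i) (j | j) <;>
    simp [twoBlockConst, blockIndicator, mul_apply, diagonal_apply, Pi.single_apply]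
  all_goals split_ifs <;> ring

theorem blockIndicator_transpose_mul_diagonal_mul (f : ι → R) (g : κ → R) :
    (blockIndicator ι κ R)ᵀ * diagonal (Sum.elim f g) * blockIndicator ι κ R =
      !![∑ i, f i, 0; 0, ∑ j, g j] := by
  ext s t
  fin_cases s <;> fin_cases t <;>
    simp [blockIndicator, mul_apply, diagonal_apply, Fintype.sum_sum_type]

theorem det_scalar_sub_twoBlockConst [Nonempty ι] [Nonempty κ] {p q x : K} (c : K)
    (hp : x + p ≠ 0) (hq : x + q ≠ 0) :
    (scalar (ι ⊕ κ) x - twoBlockConst p q c).det =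
      (x + p) ^ (Fintype.card ι - 1) * (x + q) ^ (Fintype.card κ - 1) *
        ((x - (Fintype.card ι - 1) * p) * (x - (Fintype.card κ - 1) * q) -
          Fintype.card ι * Fintype.card κ * c ^ 2) := by
  have hD : (diagonal (Sum.elim (fun _ : ι => x + p) (fun _ : κ => x + q))).det =
      (x + p) ^ Fintype.card ι * (x + q) ^ Fintype.card κ := by
    simp [det_diagonal, Fintype.prod_sum_type]
  have hDinv : (diagonal (Sum.elim (fun _ : ι => x + p) (fun _ : κ => x + q)))⁻¹ =
      diagonal (Sum.elim (fun _ : ι => (x + p)⁻¹) (fun _ : κ => (x + q)⁻¹)) := by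
    refine inv_eq_left_inv ?_
    rw [diagonal_mul_diagonal, ← diagonal_one]
    congr 1
    ext (i | i) <;> simp [hp, hq]
  have hdet₂ (a b : K) : (1 + -(!![a, 0; 0, b] * !![p, c; c, q])).det =
      (1 - a * p) * (1 - b * q) - a * b * c ^ 2 := by
    rw [mul_fin_two, one_fin_two, ← sub_eq_add_neg, of_sub_of, det_fin_two]
    simp only [of_apply, cons_val_zero, cons_val_one, cons_val_fin_one, Pi.sub_apply]
    ring
  rw [scalar_sub_twoBlockConst, sub_eq_add_neg, ← Matrix.mul_neg,
    det_add_mul _ _ (by simp [hD, hp, hq]), hDinv, Matrix.neg_mul, Matrix.neg_mul,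
    ← Matrix.mul_assoc, blockIndicator_transpose_mul_diagonal_mul, hD, hdet₂]
  obtain ⟨k, hk⟩ := Nat.exists_eq_add_one_of_ne_zero (Fintype.card_ne_zero (α := ι))
  obtain ⟨l, hl⟩ := Nat.exists_eq_add_one_of_ne_zero (Fintype.card_ne_zero (α := κ))
  simp only [hk, hl, Finset.sum_const, Finset.card_univ, nsmul_eq_mul, Nat.cast_add, Nat.cast_one,
    add_tsub_cancel_right]
  field_simp
  ring

theorem charpoly_twoBlockConst [Infinite K] [Nonempty ι] [Nonempty κ] (p q c : K) :
    (twoBlockConst p q c : Matrix (ι ⊕ κ) (ι ⊕ κ) K).charpoly =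
      (X + C p) ^ (Fintype.card ι - 1) * (X + C q) ^ (Fintype.card κ - 1) *
        ((X - C ((Fintype.card ι - 1) * p)) * (X - C ((Fintype.card κ - 1) * q)) -
          C (Fintype.card ι * Fintype.card κ * c ^ 2)) := by
  refine eq_of_infinite_eval_eq _ _ ((Set.toFinite {-p, -q}).infinite_compl.mono ?_)
  intro x hx
  simp only [Set.mem_compl_iff, Set.mem_insert_iff, Set.mem_singleton_iff, not_or] at hx
  rw [Set.mem_ofPred_eq, eval_charpoly, det_scalar_sub_twoBlockConst c
    (fun h => hx.1 (eq_neg_of_add_eq_zero_left h)) (fun h => hx.2 (eq_neg_of_add_eq_zero_left h))]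
  simp

theorem seidelEnergy_twoBlockConst [Nonempty ι] [Nonempty κ] {p q : ℝ} (c : ℝ)
    (hp : p ≤ 0) (hq : q ≤ 0)
    (hpq : (Fintype.card ι - 1) * p * ((Fintype.card κ - 1) * q) ≤
      Fintype.card ι * Fintype.card κ * c ^ 2) :
    seidelEnergy (twoBlockConst p q c : Matrix (ι ⊕ κ) (ι ⊕ κ) ℝ) =
      -((Fintype.card ι - 1) * p) - (Fintype.card κ - 1) * q +
        √(((Fintype.card ι - 1) * p - (Fintype.card κ - 1) * q) ^ 2 +
          4 * (Fintype.card ι * Fintype.card κ * c ^ 2)) := by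
  have hX (r : ℝ) : X + C r = X - C (-r) := by rw [map_neg, sub_neg_eq_add]
  rw [seidelEnergy, charpoly_twoBlockConst, hX, hX, X_sub_C_mul_X_sub_C_sub_C (by positivity),
    roots_mul, roots_mul, roots_mul, roots_pow, roots_pow, roots_X_sub_C, roots_X_sub_C,
    roots_X_sub_C, roots_X_sub_C]
  · simp only [Multiset.nsmul_singleton, Multiset.singleton_add, Multiset.add_cons,
      Multiset.map_cons, Multiset.map_add, Multiset.map_replicate, abs_neg, abs_of_nonpos hp,
      abs_of_nonpos hq, Multiset.map_singleton, Multiset.sum_cons, Multiset.sum_add,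
      Multiset.sum_replicate, smul_neg, nsmul_eq_mul, Nat.cast_pred Fintype.card_pos,
      Multiset.sum_singleton]
    linarith [abs_add_abs_eq_sqrt_of_mul_le hpq]
  all_goals simp [X_sub_C_ne_zero, X_add_C_ne_zero]

end Matrix

theorem seidelS_eq_twoBlockConst (m n : ℕ) :
    seidelS m n = twoBlockConst (1 - 2 * (n : ℝ)) (1 - 2 * (m : ℝ)) (1 - 2 * ((m : ℝ) + n - 2)) := by
  ext (i | i) (j | j) <;> simp [seidelS, twoBlockConst]

noncomputable def seidelEnergyClosedForm (M N : ℝ) : ℝ :=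
  (M - 1) * (2 * N - 1) + (N - 1) * (2 * M - 1) +
    √((M - N) ^ 2 + 4 * M * N * (2 * M + 2 * N - 5) ^ 2)

theorem seidelEnergyClosedForm_comm (M N : ℝ) :
    seidelEnergyClosedForm M N = seidelEnergyClosedForm N M := by
  unfold seidelEnergyClosedForm
  ring_nf

theorem seidelEnergyClosedForm_sub_one_lt {M N : ℝ} (hM : 2 ≤ M) (hN : 2 ≤ N) :
    seidelEnergyClosedForm (M - 1) N < seidelEnergyClosedForm M N := by
  have hdisc : (M - 1 - N) ^ 2 + 4 * (M - 1) * N * (2 * (M - 1) + 2 * N - 5) ^ 2 ≤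
      (M - N) ^ 2 + 4 * M * N * (2 * M + 2 * N - 5) ^ 2 := by
    nlinarith [sq_nonneg (2 * M + 2 * N - 7), mul_nonneg (by linarith : (0 : ℝ) ≤ M - 1)
      (by linarith : (0 : ℝ) ≤ N), mul_nonneg (by linarith : (0 : ℝ) ≤ N) (sq_nonneg (2 * M + 2 * N - 7))]
  unfold seidelEnergyClosedForm
  nlinarith [Real.sqrt_le_sqrt hdisc]

theorem seidelEnergy_seidelS {m n : ℕ} (hm : 2 ≤ m) (hn : 2 ≤ n) :
    seidelEnergy (seidelS m n) = seidelEnergyClosedForm m n := by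
  have : Nonempty (Fin m) := ⟨⟨0, by omega⟩⟩
  have : Nonempty (Fin n) := ⟨⟨0, by omega⟩⟩
  have hM : (2 : ℝ) ≤ m := by exact_mod_cast hm
  have hN : (2 : ℝ) ≤ n := by exact_mod_cast hn
  rw [seidelS_eq_twoBlockConst, seidelEnergy_twoBlockConst _ (by linarith) (by linarith)]
  · simp only [Fintype.card_fin, seidelEnergyClosedForm]
    congr 2 <;> ring
  · simp only [Fintype.card_fin]
    have hm' : ((m : ℝ) - 1) * (2 * m - 1) ≤ m * (2 * m + 2 * n - 5) := by nlinarith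
    have hn' : ((n : ℝ) - 1) * (2 * n - 1) ≤ n * (2 * m + 2 * n - 5) := by nlinarith
    calc ((m : ℝ) - 1) * (1 - 2 * n) * ((n - 1) * (1 - 2 * m))
        = ((m - 1) * (2 * m - 1)) * ((n - 1) * (2 * n - 1)) := by ring
      _ ≤ (m * (2 * m + 2 * n - 5)) * (n * (2 * m + 2 * n - 5)) :=
        mul_le_mul hm' hn' (by nlinarith) (by nlinarith)
      _ = m * n * (1 - 2 * (m + n - 2)) ^ 2 := by ring

theorem stmt19 (m n : ℕ) (hm : 3 ≤ m) (hn : 3 ≤ n) :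
    seidelEnergy (seidelS (m - 1) n) < seidelEnergy (seidelS m n) ∧
    seidelEnergy (seidelS m (n - 1)) < seidelEnergy (seidelS m n) := by
  have hM : (3 : ℝ) ≤ m := by exact_mod_cast hm
  have hN : (3 : ℝ) ≤ n := by exact_mod_cast hn
  rw [seidelEnergy_seidelS (by omega) (by omega), seidelEnergy_seidelS (by omega) (by omega),
    seidelEnergy_seidelS (by omega) (by omega), Nat.cast_pred (by omega), Nat.cast_pred (by omega)]
  constructor
  · exact seidelEnergyClosedForm_sub_one_lt (by linarith) (by linarith)
  · rw [seidelEnergyClosedForm_comm, seidelEnergyClosedForm_comm m]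
    exact seidelEnergyClosedForm_sub_one_lt (by linarith) (by linarith)
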